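/- Theorem 3.2, Part 3 (Relative Advantage, best draft): Under the reward structure above, let i_max be an index such that r^draft_{i_max} = max_{1 ≤ i ≤ n} r^draft_i. If r^sol_{i_max} = 1, then the standardized advantages satisfy Â_{i_max}(r^sol) ≤ Â_{i_max}(r^draft). -/

import Mathlib

open Finset

/-- Population mean of a vector `r : Fin n → ℝ`. -/
noncomputable def mean {n : ℕ} (r : Fin n → ℝ) : ℝ := (∑ i, r i) / n

/-- Population variance of a vector `r : Fin n → ℝ`. -/
noncomputable def pvar {n : ℕ} (r : Fin n → ℝ) : ℝ := (∑ i, (r i - mean r) ^ 2) / n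

/-- Population standard deviation. -/
noncomputable def pstd {n : ℕ} (r : Fin n → ℝ) : ℝ := Real.sqrt (pvar r)

/-- Coefficient of variation. -/
noncomputable def cv {n : ℕ} (r : Fin n → ℝ) : ℝ := pstd r / mean r

/-- Standardized (group-relative) advantage of the `i`-th entry. -/
noncomputable def adv {n : ℕ} (r : Fin n → ℝ) (i : Fin n) : ℝ := (r i - mean r) / pstd r

/-!
With `p = mean r^sol`, the binary reward has variance `p (1 - p)`, so its advantage at a solved
index is `√((1 - p) / p)`. The draft reward lies in `[0, M]` with `M = r^draft_{i_max}`, so by the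
Bhatia–Davis inequality its variance is at most `m (M - m)`, `m = mean r^draft`, and its advantage
at `i_max` is at least `√((M - m) / m)`. Finally `m ≤ p M`, because `r^draft_i ≤ M r^sol_i`,
and this is exactly `(1 - p) / p ≤ (M - m) / m`.
-/

theorem Real.div_sqrt_mul {x y : ℝ} (hx : 0 ≤ x) (hy : 0 ≤ y) : x / √(x * y) = √(x / y) := by
  rw [Real.sqrt_mul hx, ← div_div, Real.div_sqrt, Real.sqrt_div' _ hy]

section Statistics

variable {n : ℕ}

theorem mean_nonneg {r : Fin n → ℝ} (hr : ∀ i, 0 ≤ r i) : 0 ≤ mean r :=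
  div_nonneg (sum_nonneg fun i _ => hr i) n.cast_nonneg

theorem mean_pos {r : Fin n → ℝ} (hr : ∀ i, 0 ≤ r i) {j : Fin n} (hj : 0 < r j) : 0 < mean r :=
  div_pos (sum_pos' (fun i _ => hr i) ⟨j, mem_univ j, hj⟩) (Nat.cast_pos.2 j.pos)

theorem mean_le_mean {r s : Fin n → ℝ} (h : ∀ i, r i ≤ s i) : mean r ≤ mean s :=
  div_le_div_of_nonneg_right (sum_le_sum fun i _ => h i) n.cast_nonneg

theorem mean_const_mul (c : ℝ) (r : Fin n → ℝ) : mean (fun i => c * r i) = c * mean r := by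
  rw [mean, mean, ← mul_sum, mul_div_assoc]

theorem pvar_pos_of_ne_mean {r : Fin n → ℝ} {j : Fin n} (hj : r j ≠ mean r) : 0 < pvar r :=
  div_pos (sum_pos' (fun _ _ => sq_nonneg _) ⟨j, mem_univ j, sq_pos_of_ne_zero (sub_ne_zero.2 hj)⟩)
    (Nat.cast_pos.2 j.pos)

variable [NeZero n]

theorem mean_le_of_forall_le {r : Fin n → ℝ} {c : ℝ} (h : ∀ i, r i ≤ c) : mean r ≤ c := by
  have hn : (0 : ℝ) < n := Nat.cast_pos.2 (Nat.pos_of_ne_zero (NeZero.ne n))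
  rw [mean, div_le_iff₀ hn]
  calc ∑ i, r i ≤ ∑ _i : Fin n, c := sum_le_sum fun i _ => h i
    _ = c * n := by simp [mul_comm]

theorem sum_sub_mean (r : Fin n → ℝ) : ∑ i, (r i - mean r) = 0 := by
  have hn : (n : ℝ) ≠ 0 := Nat.cast_ne_zero.2 (NeZero.ne n)
  rw [sum_sub_distrib, sum_const, card_univ, Fintype.card_fin, nsmul_eq_mul, mean,
    mul_div_cancel₀ _ hn, sub_self]

/-- Each summand satisfies `(r - m)² + (b - r)(r - a) = (b - m)(m - a) + (a + b - 2m)(r - m)`,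
and the last term sums to zero. -/
theorem card_mul_pvar_add_sum (r : Fin n → ℝ) (a b : ℝ) :
    n * pvar r + ∑ i, (b - r i) * (r i - a) = n * ((b - mean r) * (mean r - a)) := by
  have hn : (n : ℝ) ≠ 0 := Nat.cast_ne_zero.2 (NeZero.ne n)
  have hterm : ∀ i, (r i - mean r) ^ 2 + (b - r i) * (r i - a) =
      (b - mean r) * (mean r - a) + (a + b - 2 * mean r) * (r i - mean r) := fun i => by ring
  rw [pvar, mul_div_cancel₀ _ hn, ← sum_add_distrib, sum_congr rfl fun i _ => hterm i,
    sum_add_distrib, sum_const, card_univ, Fintype.card_fin, nsmul_eq_mul, ← mul_sum,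
    sum_sub_mean, mul_zero, add_zero]

theorem pvar_le_of_mem_Icc {r : Fin n → ℝ} {a b : ℝ} (h : ∀ i, a ≤ r i ∧ r i ≤ b) :
    pvar r ≤ (b - mean r) * (mean r - a) := by
  have hn : (0 : ℝ) < n := Nat.cast_pos.2 (Nat.pos_of_ne_zero (NeZero.ne n))
  have hsum : 0 ≤ ∑ i, (b - r i) * (r i - a) :=
    sum_nonneg fun i _ => mul_nonneg (sub_nonneg.2 (h i).2) (sub_nonneg.2 (h i).1)
  have := card_mul_pvar_add_sum r a b
  exact le_of_mul_le_mul_left (by linarith) hn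

theorem pvar_of_binary {r : Fin n → ℝ} (hr : ∀ i, r i = 0 ∨ r i = 1) :
    pvar r = (1 - mean r) * mean r := by
  have hn : (n : ℝ) ≠ 0 := Nat.cast_ne_zero.2 (NeZero.ne n)
  have hsum : ∑ i, (1 - r i) * (r i - 0) = 0 :=
    sum_eq_zero fun i _ => by rcases hr i with h | h <;> simp [h]
  have := card_mul_pvar_add_sum r 0 1
  rw [hsum, add_zero, sub_zero] at this
  exact mul_left_cancel₀ hn this

theorem adv_of_binary {r : Fin n → ℝ} (hr : ∀ i, r i = 0 ∨ r i = 1) {i : Fin n} (hi : r i = 1) :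
    adv r i = √((1 - mean r) / mean r) := by
  have hr0 : ∀ i, 0 ≤ r i := fun i => by rcases hr i with h | h <;> simp [h]
  have hr1 : ∀ i, r i ≤ 1 := fun i => by rcases hr i with h | h <;> simp [h]
  rw [adv, pstd, pvar_of_binary hr, hi]
  exact Real.div_sqrt_mul (sub_nonneg.2 (mean_le_of_forall_le hr1)) (mean_nonneg hr0)

theorem sqrt_div_mean_le_adv_of_isMax {r : Fin n → ℝ} (hr : ∀ i, 0 ≤ r i) {k : Fin n}
    (hk : ∀ i, r i ≤ r k) (hvar : 0 < pvar r) :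
    √((r k - mean r) / mean r) ≤ adv r k := by
  have hbound : pvar r ≤ (r k - mean r) * mean r := by
    simpa using pvar_le_of_mem_Icc fun i => ⟨hr i, hk i⟩
  have hgap : 0 ≤ r k - mean r := sub_nonneg.2 (mean_le_of_forall_le hk)
  calc √((r k - mean r) / mean r) = (r k - mean r) / √((r k - mean r) * mean r) :=
        (Real.div_sqrt_mul hgap (mean_nonneg hr)).symm
    _ ≤ (r k - mean r) / pstd r :=
        div_le_div_of_nonneg_left hgap (Real.sqrt_pos.2 hvar) (Real.sqrt_le_sqrt hbound)

end Statistics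

theorem stmt_2_general {n : ℕ} (rsol ρ rdraft : Fin n → ℝ)
    (hsol : ∀ i, rsol i = 0 ∨ rsol i = 1)
    (hρ : ∀ i, 0 ≤ ρ i ∧ ρ i ≤ 1)
    (hdraft : ∀ i, rdraft i = ρ i * rsol i)
    (hn0 : 1 ≤ (Finset.univ.filter (fun i => rsol i = 0)).card)
    (hj : ∃ j, rsol j = 1 ∧ 0 < ρ j)
    (imax : Fin n) (hmax : ∀ i, rdraft i ≤ rdraft imax)
    (hi : rsol imax = 1) :
    adv rsol imax ≤ adv rdraft imax := by
  have : NeZero n := ⟨imax.pos.ne'⟩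
  obtain ⟨j, hj1, hjρ⟩ := hj
  obtain ⟨i₀, hi₀⟩ := Finset.card_pos.1 hn0
  have hdraft_nonneg : ∀ i, 0 ≤ rdraft i := fun i => by
    rw [hdraft]; rcases hsol i with h | h <;> simp [h, (hρ i).1]
  have hdraft_le : ∀ i, rdraft i ≤ rdraft imax * rsol i := fun i => by
    rcases hsol i with h | h
    · rw [hdraft, h, mul_zero, mul_zero]
    · rw [h, mul_one]; exact hmax i
  have hp : 0 < mean rsol :=
    mean_pos (fun i => by rcases hsol i with h | h <;> simp [h]) (j := imax) (by simp [hi])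
  have hm : 0 < mean rdraft := mean_pos hdraft_nonneg (j := j) (by rwa [hdraft, hj1, mul_one])
  have hm_le : mean rdraft ≤ rdraft imax * mean rsol :=
    (mean_le_mean hdraft_le).trans_eq (mean_const_mul _ _)
  have hvar : 0 < pvar rdraft :=
    pvar_pos_of_ne_mean (j := i₀) (by rw [hdraft, (mem_filter.1 hi₀).2, mul_zero]; exact hm.ne)
  calc adv rsol imax = √((1 - mean rsol) / mean rsol) := adv_of_binary hsol hi
    _ ≤ √((rdraft imax - mean rdraft) / mean rdraft) :=
        Real.sqrt_le_sqrt (by rw [div_le_div_iff₀ hp hm]; linarith)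
    _ ≤ adv rdraft imax := sqrt_div_mean_le_adv_of_isMax hdraft_nonneg hmax hvar

/-- Theorem 3.2, Part 3 (best draft): if `imax` attains the maximum of `rdraft`
and `rsol imax = 1`, then `adv rsol imax ≤ adv rdraft imax`. -/
theorem stmt_2 {n : ℕ} (hn : 1 ≤ n) (rsol ρ rdraft : Fin n → ℝ)
    (hsol : ∀ i, rsol i = 0 ∨ rsol i = 1)
    (hρ : ∀ i, 0 ≤ ρ i ∧ ρ i ≤ 1)
    (hdraft : ∀ i, rdraft i = ρ i * rsol i)
    (hn1 : 1 ≤ (Finset.univ.filter (fun i => rsol i = 1)).card)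
    (hn0 : 1 ≤ (Finset.univ.filter (fun i => rsol i = 0)).card)
    (hj : ∃ j, rsol j = 1 ∧ 0 < ρ j)
    (imax : Fin n) (hmax : ∀ i, rdraft i ≤ rdraft imax)
    (hi : rsol imax = 1) :
    adv rsol imax ≤ adv rdraft imax :=
  stmt_2_general rsol ρ rdraft hsol hρ hdraft hn0 hj imax hmax hi
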